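/- Let B be self-adjoint positive semidefinite with spectrum contained in {0} ∪ [λ₀, 1/c₀] for some λ₀ > 0 and c₀ > 0, and set P = I - c₀B. Then c₀·‖(Σ_{j=0}^{k-1} P^j)·B^{1/2}‖ ≤ λ₀^{-1/2} for every k ≥ 1. -/

import Mathlib

/-!
By the continuous functional calculus, `c₀ (∑_{j<k} P^j) B^{1/2}` is `f(B)` for
`f(x) = c₀ (∑_{j<k} (1 - c₀x)^j) √x = (1 - (1 - c₀x)^k) / √x`, so its norm is at most
`sup_{x ∈ σ(B)} |f x|`. On `[λ₀, 1/c₀]` the numerator lies in `[0, 1]`, giving `f x ≤ λ₀^{-1/2}`,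
and `f 0 = 0`.
-/

open Finset Polynomial

theorem geom_sum_one_sub_mul_le_one {t : ℝ} (ht : t ≤ 1) (k : ℕ) :
    (∑ j ∈ range k, (1 - t) ^ j) * t ≤ 1 := by
  have h := geom_sum_mul (1 - t) k
  have : 0 ≤ (1 - t) ^ k := pow_nonneg (by linarith) k
  linarith

theorem mul_geom_sum_one_sub_mul_sqrt_le {c l x : ℝ} (hc : 0 < c) (hl : 0 < l) (hlx : l ≤ x)
    (hcx : c * x ≤ 1) (k : ℕ) :
    c * ((∑ j ∈ range k, (1 - c * x) ^ j) * √x) ≤ (√l)⁻¹ := by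
  have hx₀ : 0 < x := hl.trans_le hlx
  have hx : 0 < √x := Real.sqrt_pos.mpr hx₀
  calc c * ((∑ j ∈ range k, (1 - c * x) ^ j) * √x)
      = (∑ j ∈ range k, (1 - c * x) ^ j) * (c * x) / √x := by
        field_simp
        rw [Real.sq_sqrt hx₀.le]
        ring
    _ ≤ 1 / √x := by gcongr; exact geom_sum_one_sub_mul_le_one hcx k
    _ ≤ (√l)⁻¹ := by rw [one_div]; gcongr

theorem cfc_geom_sum_one_sub_mul {A : Type*} [Ring A] [StarRing A] [TopologicalSpace A]
    [Algebra ℝ A] [ContinuousFunctionalCalculus ℝ A IsSelfAdjoint]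
    (a : A) (c : ℝ) (k : ℕ) (ha : IsSelfAdjoint a := by cfc_tac) :
    cfc (fun x : ℝ => ∑ j ∈ range k, (1 - c * x) ^ j) a = ∑ j ∈ range k, (1 - c • a) ^ j := by
  have h := cfc_polynomial (∑ j ∈ range k, (1 - C c * X) ^ j) a
  simp only [eval_finsetSum, eval_pow, eval_sub, eval_one, eval_mul, eval_C, eval_X, map_sum,
    map_pow, map_sub, map_one, map_mul, aeval_C, aeval_X, ← Algebra.smul_def] at h
  exact h

theorem smul_geom_sum_one_sub_smul_mul_sqrt {A : Type*} [CStarAlgebra A] [PartialOrder A]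
    [StarOrderedRing A] (a : A) (c : ℝ) (k : ℕ) (ha : 0 ≤ a := by cfc_tac) :
    c • ((∑ j ∈ range k, (1 - c • a) ^ j) * CFC.sqrt a)
      = cfc (fun x : ℝ => c * ((∑ j ∈ range k, (1 - c * x) ^ j) * √x)) a := by
  rw [cfc_const_mul .., cfc_mul .., cfc_geom_sum_one_sub_mul a c k, CFC.sqrt_eq_real_sqrt a,
    cfcₙ_eq_cfc]

theorem stmt12 {E : Type*} [NormedAddCommGroup E] [InnerProductSpace ℂ E] [CompleteSpace E]
    (B : E →L[ℂ] E) (hBpos : 0 ≤ B)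
    (lam₀ c₀ : ℝ) (hlam₀ : 0 < lam₀) (hc₀ : 0 < c₀)
    (hspec : spectrum ℝ B ⊆ {0} ∪ Set.Icc lam₀ (1 / c₀))
    (P : E →L[ℂ] E) (hP : P = 1 - c₀ • B)
    (k : ℕ) :
    c₀ * ‖(∑ j ∈ Finset.range k, P ^ j) * CFC.sqrt B‖ ≤ lam₀ ^ (-(1 / 2 : ℝ)) := by
  rw [← norm_smul_of_nonneg hc₀.le, hP, smul_geom_sum_one_sub_smul_mul_sqrt B c₀ k,
    Real.rpow_neg hlam₀.le, ← Real.sqrt_eq_rpow]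
  refine norm_cfc_le (by positivity) fun x hx => ?_
  rcases hspec hx with rfl | ⟨hlx, hxc⟩
  · simp only [Real.sqrt_zero, mul_zero, norm_zero]
    positivity
  · have hcx : c₀ * x ≤ 1 := by rwa [le_div_iff₀' hc₀] at hxc
    rw [Real.norm_of_nonneg (by positivity)]
    exact mul_geom_sum_one_sub_mul_sqrt_le hc₀ hlam₀ hlx hcx k
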